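/- (Lemma on the torsion term t, part (i).) For every λ > 0, every Z ∈ m, and every X that lies either in ι(n) or in p, one has g_λ(π_m([Z,X]), X) = 0, where π_m : so(5) → m is the linear projection onto m along ι(u) coming from the decomposition so(5) = ι(u) ⊕ m. -/

import Mathlib

open Matrix

attribute [local instance 100] LieRing.ofAssociativeRing

def Pmat : Matrix (Fin 4) (Fin 4) ℝ :=
  !![0, -1, 0, 0; 1, 0, 0, 0; 0, 0, 0, -1; 0, 0, 1, 0]

/-- The stabilizer subalgebra `u = {A ∈ so(4) : AP = PA}`. -/
def uSub : Submodule ℝ (Matrix (Fin 4) (Fin 4) ℝ) where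
  carrier := {A | Aᵀ = -A ∧ A * Pmat = Pmat * A}
  add_mem' := by
    rintro a b ⟨ha1, ha2⟩ ⟨hb1, hb2⟩
    exact ⟨by rw [Matrix.transpose_add, ha1, hb1, neg_add],
      by rw [add_mul, mul_add, ha2, hb2]⟩
  zero_mem' := ⟨by simp, by simp⟩
  smul_mem' := by
    rintro c a ⟨h1, h2⟩
    exact ⟨by rw [Matrix.transpose_smul, h1, smul_neg],
      by rw [Matrix.smul_mul, Matrix.mul_smul, h2]⟩

/-- The complement `n = {A ∈ so(4) : AP = −PA}`. -/
def nSub : Submodule ℝ (Matrix (Fin 4) (Fin 4) ℝ) where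
  carrier := {A | Aᵀ = -A ∧ A * Pmat = -(Pmat * A)}
  add_mem' := by
    rintro a b ⟨ha1, ha2⟩ ⟨hb1, hb2⟩
    exact ⟨by rw [Matrix.transpose_add, ha1, hb1, neg_add],
      by rw [add_mul, mul_add, ha2, hb2, neg_add]⟩
  zero_mem' := ⟨by simp, by simp⟩
  smul_mem' := by
    rintro c a ⟨h1, h2⟩
    exact ⟨by rw [Matrix.transpose_smul, h1, smul_neg],
      by rw [Matrix.smul_mul, Matrix.mul_smul, h2, smul_neg]⟩

/-- The embedding `ι : M₄(ℝ) → M₅(ℝ)` sending `A` to the block-diagonal matrix with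
upper-left block `A` and last row and column zero. -/
noncomputable def ι4 : Matrix (Fin 4) (Fin 4) ℝ →ₗ[ℝ] Matrix (Fin 5) (Fin 5) ℝ where
  toFun A := Matrix.reindexLinearEquiv ℝ ℝ finSumFinEquiv finSumFinEquiv
    (Matrix.fromBlocks A 0 0 (0 : Matrix (Fin 1) (Fin 1) ℝ))
  map_add' A B := by
    rw [← map_add]
    refine congrArg _ ?_
    rw [Matrix.fromBlocks_add]
    simp
  map_smul' c A := by
    dsimp only [RingHom.id_apply]
    rw [← _root_.map_smul (Matrix.reindexLinearEquiv ℝ ℝ finSumFinEquiv finSumFinEquiv)]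
    refine congrArg _ ?_
    rw [Matrix.fromBlocks_smul]
    simp

/-- `so(5)` as a submodule of the 5×5 real matrices. -/
def so5 : Submodule ℝ (Matrix (Fin 5) (Fin 5) ℝ) where
  carrier := {X | Xᵀ = -X}
  add_mem' := by
    intro a b ha hb
    simp only [Set.mem_setOf_eq] at *
    rw [Matrix.transpose_add, ha, hb, neg_add]
  zero_mem' := by simp
  smul_mem' := by
    intro c a ha
    simp only [Set.mem_setOf_eq] at *
    rw [Matrix.transpose_smul, ha, smul_neg]

/-- `so(5)` as a Lie subalgebra of the 5×5 real matrices, with the commutator bracket. -/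
def so5Alg : LieSubalgebra ℝ (Matrix (Fin 5) (Fin 5) ℝ) :=
  { so5 with
    lie_mem' := by
      intro x y hx hy
      simp only [so5, Set.mem_setOf_eq] at *
      rw [Ring.lie_def, Matrix.transpose_sub, Matrix.transpose_mul, Matrix.transpose_mul,
        hx, hy]
      noncomm_ring }

/-- The Cartan complement `p = {X ∈ so(5) : X_{ij} = 0 for i,j ≤ 4}`. -/
def pSub : Submodule ℝ (Matrix (Fin 5) (Fin 5) ℝ) where
  carrier := {X | Xᵀ = -X ∧ ∀ i j : Fin 5, (i : ℕ) < 4 → (j : ℕ) < 4 → X i j = 0}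
  add_mem' := by
    rintro a b ⟨ha1, ha2⟩ ⟨hb1, hb2⟩
    refine ⟨by rw [Matrix.transpose_add, ha1, hb1, neg_add], fun i j hi hj => ?_⟩
    simp [Matrix.add_apply, ha2 i j hi hj, hb2 i j hi hj]
  zero_mem' := ⟨by simp, fun i j _ _ => rfl⟩
  smul_mem' := by
    rintro c a ⟨h1, h2⟩
    refine ⟨by rw [Matrix.transpose_smul, h1, smul_neg], fun i j hi hj => ?_⟩
    simp [Matrix.smul_apply, h2 i j hi hj]

/-- `m = ι(n) ⊕ p` inside `so(5)`. -/
noncomputable def mSub : Submodule ℝ (Matrix (Fin 5) (Fin 5) ℝ) :=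
  nSub.map ι4 ⊔ pSub
/-- Symmetrization map into `so(5)`; it is the identity on skew-symmetric matrices. -/
noncomputable def toSo5 (X : Matrix (Fin 5) (Fin 5) ℝ) : so5Alg :=
  ⟨(1 / 2 : ℝ) • (X - Xᵀ), by
    show ((1 / 2 : ℝ) • (X - Xᵀ))ᵀ = -((1 / 2 : ℝ) • (X - Xᵀ))
    rw [Matrix.transpose_smul, Matrix.transpose_sub, Matrix.transpose_transpose,
      ← neg_sub X Xᵀ, smul_neg]⟩

/-- The Killing form `κ(X,Y) = tr(ad X ∘ ad Y)` of the Lie algebra `so(5)`, as a function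
of (skew-symmetric) 5×5 matrices. -/
noncomputable def kil (X Y : Matrix (Fin 5) (Fin 5) ℝ) : ℝ :=
  killingForm ℝ ↥so5Alg (toSo5 X) (toSo5 Y)

/-- The upper-left 4×4 block of a 5×5 matrix. -/
def blk (X : Matrix (Fin 5) (Fin 5) ℝ) : Matrix (Fin 4) (Fin 4) ℝ :=
  Matrix.of fun i j => X i.castSucc j.castSucc

/-- The `ι(n)`-component of `X ∈ so(5)`, using the projection `A ↦ (A + PAP)/2` of
`so(4)` onto `n`. -/
noncomputable def nPart (X : Matrix (Fin 5) (Fin 5) ℝ) : Matrix (Fin 5) (Fin 5) ℝ :=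
  ι4 ((1 / 2 : ℝ) • (blk X + Pmat * blk X * Pmat))

/-- The `p`-component of `X ∈ so(5)`. -/
noncomputable def pPart (X : Matrix (Fin 5) (Fin 5) ℝ) : Matrix (Fin 5) (Fin 5) ℝ :=
  X - ι4 (blk X)

/-- The projection `π_m : so(5) → m` along `ι(u)`. -/
noncomputable def mPart (X : Matrix (Fin 5) (Fin 5) ℝ) : Matrix (Fin 5) (Fin 5) ℝ :=
  nPart X + pPart X

/-- The metric `g_λ(X,Y) = −(1/λ²)·κ(X_n,Y_n) − κ(X_p,Y_p)` on `m`. -/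
noncomputable def gl (lam : ℝ) (X Y : Matrix (Fin 5) (Fin 5) ℝ) : ℝ :=
  -(1 / lam ^ 2) * kil (nPart X) (nPart Y) - kil (pPart X) (pPart Y)

/-!
Write `Z = ι(A') + Q` with `A' ∈ n`, `Q ∈ p`.
If `X = ι(A)` with `A ∈ n`, the upper-left block of `[Z, X]` is `[A', A]`, which commutes with `P`
because `A` and `A'` both anticommute with it; so `[Z, X]` has no `ι(n)`-component, while `X` has
no `p`-component, and both terms of `g_λ` vanish.
If `X ∈ p`, then `[Q, X] ∈ [p, p] ⊆ ι(so(4))`, so the `p`-component of `[Z, X]` is `[ι(A'), X]`,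
and `κ([ι(A'), X], X) = κ(ι(A'), [X, X]) = 0` by invariance of the Killing form.
-/

theorem commute_mul_sub_mul_of_anticommute {R : Type*} [Ring R] {p a b : R}
    (ha : a * p = -(p * a)) (hb : b * p = -(p * b)) : Commute p (a * b - b * a) := by
  have hab : ∀ {x y : R}, x * p = -(p * x) → y * p = -(p * y) → Commute p (x * y) :=
    fun {x y} hx hy => by
      show p * (x * y) = x * y * p
      rw [mul_assoc x, hy, mul_neg, ← mul_assoc x p y, hx, neg_mul, neg_neg, mul_assoc]
  exact (hab ha hb).sub_right (hab hb ha)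

theorem Matrix.apply_eq_neg_apply_of_transpose_eq_neg {n R : Type*} [Neg R] {M : Matrix n n R}
    (hM : Mᵀ = -M) (i j : n) : M j i = -M i j :=
  congrFun (congrFun hM i) j

theorem Matrix.apply_self_eq_zero_of_transpose_eq_neg {n R : Type*} [NonAssocRing R]
    [NoZeroDivisors R] [CharZero R] {M : Matrix n n R} (hM : Mᵀ = -M) (i : n) : M i i = 0 :=
  CharZero.eq_neg_self_iff.mp (apply_eq_neg_apply_of_transpose_eq_neg hM i i)

theorem Pmat_mul_Pmat : Pmat * Pmat = -1 := by
  ext i j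
  fin_cases i <;> fin_cases j <;>
    simp [Pmat, Matrix.mul_apply, Fin.sum_univ_four]

section Blocks

variable (A : Matrix (Fin 4) (Fin 4) ℝ) (M N : Matrix (Fin 5) (Fin 5) ℝ)

theorem ι4_apply_castSucc (i j : Fin 4) : ι4 A i.castSucc j.castSucc = A i j := by
  change fromBlocks A 0 0 (0 : Matrix (Fin 1) (Fin 1) ℝ)
    (finSumFinEquiv.symm (Fin.castAdd 1 i)) (finSumFinEquiv.symm (Fin.castAdd 1 j)) = A i j
  rw [finSumFinEquiv_symm_apply_castAdd, finSumFinEquiv_symm_apply_castAdd]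
  rfl

theorem ι4_last_apply (j : Fin 5) : ι4 A (Fin.last 4) j = 0 := by
  change fromBlocks A 0 0 (0 : Matrix (Fin 1) (Fin 1) ℝ)
    (finSumFinEquiv.symm (Fin.last 4)) (finSumFinEquiv.symm j) = 0
  rw [finSumFinEquiv_symm_last]
  rcases (@finSumFinEquiv 4 1).symm j with _ | _ <;> rfl

theorem ι4_apply_last (i : Fin 5) : ι4 A i (Fin.last 4) = 0 := by
  change fromBlocks A 0 0 (0 : Matrix (Fin 1) (Fin 1) ℝ)
    (finSumFinEquiv.symm i) (finSumFinEquiv.symm (Fin.last 4)) = 0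
  rw [finSumFinEquiv_symm_last]
  rcases (@finSumFinEquiv 4 1).symm i with _ | _ <;> rfl

theorem blk_ι4 : blk (ι4 A) = A := by
  ext i j
  exact ι4_apply_castSucc A i j

theorem blk_add : blk (M + N) = blk M + blk N := rfl

theorem blk_sub : blk (M - N) = blk M - blk N := rfl

theorem blk_transpose : blk Mᵀ = (blk M)ᵀ := rfl

theorem blk_mul_ι4 : blk (M * ι4 A) = blk M * A := by
  ext i j
  change (M * ι4 A) i.castSucc j.castSucc = _
  simp only [mul_apply, Fin.sum_univ_castSucc, ι4_last_apply, mul_zero, add_zero,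
    ι4_apply_castSucc]
  rfl

theorem blk_ι4_mul : blk (ι4 A * M) = A * blk M := by
  ext i j
  change (ι4 A * M) i.castSucc j.castSucc = _
  simp only [mul_apply, Fin.sum_univ_castSucc, ι4_apply_last, zero_mul, add_zero,
    ι4_apply_castSucc]
  rfl

variable {M} in
theorem ι4_blk_of_last_eq_zero (hrow : ∀ j, M (Fin.last 4) j = 0)
    (hcol : ∀ i, M i (Fin.last 4) = 0) : ι4 (blk M) = M := by
  ext i j
  induction i using Fin.lastCases with
  | last => rw [ι4_last_apply, hrow]
  | cast i =>
    induction j using Fin.lastCases with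
    | last => rw [ι4_apply_last, hcol]
    | cast j => exact ι4_apply_castSucc _ i j

theorem ι4_transpose : (ι4 A)ᵀ = ι4 Aᵀ := by
  rw [← ι4_blk_of_last_eq_zero (M := (ι4 A)ᵀ) (ι4_apply_last A) (ι4_last_apply A),
    blk_transpose, blk_ι4]

variable {M N}

theorem blk_eq_zero_of_mem_pSub (hM : M ∈ pSub) : blk M = 0 := by
  ext i j
  exact hM.2 _ _ (by simp) (by simp)

theorem ι4_blk_lie_of_mem_pSub (hM : M ∈ pSub) (hN : N ∈ pSub) :
    ι4 (blk (M * N - N * M)) = M * N - N * M := by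
  have hM0 := apply_self_eq_zero_of_transpose_eq_neg hM.1
  have hN0 := apply_self_eq_zero_of_transpose_eq_neg hN.1
  have hrow : ∀ j, (M * N - N * M) (Fin.last 4) j = 0 := by
    intro j
    rw [Matrix.sub_apply, mul_apply, mul_apply, ← Finset.sum_sub_distrib, Fin.sum_univ_castSucc,
      hM0, hN0, zero_mul, zero_mul, sub_self, add_zero]
    refine Finset.sum_eq_zero fun k _ => ?_
    induction j using Fin.lastCases with
    | last =>
      rw [apply_eq_neg_apply_of_transpose_eq_neg hM.1, apply_eq_neg_apply_of_transpose_eq_neg hN.1]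
      ring
    | cast j =>
      rw [hM.2 k.castSucc j.castSucc (by simp) (by simp),
        hN.2 k.castSucc j.castSucc (by simp) (by simp)]
      ring
  refine ι4_blk_of_last_eq_zero hrow fun i => ?_
  have hskew : (M * N - N * M)ᵀ = -(M * N - N * M) := by
    rw [transpose_sub, transpose_mul, transpose_mul, hM.1, hN.1]
    noncomm_ring
  rw [apply_eq_neg_apply_of_transpose_eq_neg hskew, hrow, neg_zero]

end Blocks

section Projections

variable {M : Matrix (Fin 5) (Fin 5) ℝ}

theorem nPart_eq_zero_of_commute (h : Commute Pmat (blk M)) : nPart M = 0 := by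
  rw [nPart, h.eq, mul_assoc, Pmat_mul_Pmat, mul_neg_one, add_neg_cancel, smul_zero, map_zero]

theorem nPart_of_blk_eq_zero (h : blk M = 0) : nPart M = 0 :=
  nPart_eq_zero_of_commute (h ▸ Commute.zero_right Pmat)

theorem pPart_of_blk_eq_zero (h : blk M = 0) : pPart M = M := by
  rw [pPart, h, map_zero, sub_zero]

theorem pPart_ι4 (A : Matrix (Fin 4) (Fin 4) ℝ) : pPart (ι4 A) = 0 := by
  rw [pPart, blk_ι4, sub_self]

variable (M)

theorem nPart_mPart : nPart (mPart M) = nPart M := by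
  have hblk : blk (mPart M) = (1 / 2 : ℝ) • (blk M + Pmat * blk M * Pmat) := by
    rw [mPart, blk_add, nPart, pPart, blk_ι4, blk_sub, blk_ι4, sub_self, add_zero]
  have hPP : Pmat * (Pmat * blk M * Pmat) * Pmat = blk M := by
    simp only [← mul_assoc, Pmat_mul_Pmat, neg_mul, one_mul]
    rw [mul_assoc, Pmat_mul_Pmat, mul_neg_one, neg_neg]
  have hfix : Pmat * blk (mPart M) * Pmat = blk (mPart M) := by
    rw [hblk, Matrix.mul_smul, Matrix.smul_mul, mul_add, add_mul, hPP, add_comm]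
  rw [nPart, hfix, ← two_smul ℝ, smul_smul]
  norm_num [hblk, nPart]

theorem pPart_mPart : pPart (mPart M) = pPart M := by
  rw [pPart, mPart, nPart, pPart, blk_add, blk_ι4, blk_sub, blk_ι4, sub_self, add_zero]
  abel

theorem gl_mPart_left (lam : ℝ) (Y : Matrix (Fin 5) (Fin 5) ℝ) :
    gl lam (mPart M) Y = gl lam M Y := by
  rw [gl, gl, nPart_mPart, pPart_mPart]

end Projections

section Brackets

variable {A A' : Matrix (Fin 4) (Fin 4) ℝ} {Q X : Matrix (Fin 5) (Fin 5) ℝ}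

theorem nPart_lie_ι4_of_mem_nSub (hA' : A' ∈ nSub) (hA : A ∈ nSub) (hQ : blk Q = 0) :
    nPart ((ι4 A' + Q) * ι4 A - ι4 A * (ι4 A' + Q)) = 0 := by
  apply nPart_eq_zero_of_commute
  rw [blk_sub, blk_mul_ι4, blk_ι4_mul, blk_add, blk_ι4, hQ, add_zero]
  exact commute_mul_sub_mul_of_anticommute hA'.2 hA.2

theorem pPart_lie_of_mem_pSub (hQ : Q ∈ pSub) (hX : X ∈ pSub) :
    pPart ((ι4 A' + Q) * X - X * (ι4 A' + Q)) = ι4 A' * X - X * ι4 A' := by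
  have hsplit : (ι4 A' + Q) * X - X * (ι4 A' + Q)
      = (ι4 A' * X - X * ι4 A') + (Q * X - X * Q) := by noncomm_ring
  have hblk : blk (ι4 A' * X - X * ι4 A') = 0 := by
    rw [blk_sub, blk_ι4_mul, blk_mul_ι4, blk_eq_zero_of_mem_pSub hX, mul_zero, zero_mul, sub_zero]
  rw [pPart, hsplit, blk_add, hblk, zero_add, ι4_blk_lie_of_mem_pSub hQ hX, add_sub_cancel_right]

end Brackets

section Killing

theorem kil_of_transpose_eq_neg {X Y : Matrix (Fin 5) (Fin 5) ℝ} (hX : Xᵀ = -X) (hY : Yᵀ = -Y) :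
    kil X Y = killingForm ℝ so5Alg ⟨X, hX⟩ ⟨Y, hY⟩ := by
  have htoSo5 : ∀ {W : Matrix (Fin 5) (Fin 5) ℝ} (hW : Wᵀ = -W), toSo5 W = ⟨W, hW⟩ :=
    fun {W} hW => Subtype.ext <| by
      change (1 / 2 : ℝ) • (W - Wᵀ) = W
      rw [hW, sub_neg_eq_add, ← two_smul ℝ W, smul_smul]
      norm_num
  rw [kil, htoSo5 hX, htoSo5 hY]

theorem toSo5_zero : toSo5 0 = 0 :=
  Subtype.ext <| by simp [toSo5]

theorem kil_zero_left (Y : Matrix (Fin 5) (Fin 5) ℝ) : kil 0 Y = 0 := by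
  rw [kil, toSo5_zero, map_zero, LinearMap.zero_apply]

theorem kil_zero_right (X : Matrix (Fin 5) (Fin 5) ℝ) : kil X 0 = 0 := by
  rw [kil, toSo5_zero, map_zero]

theorem kil_lie_self {N X : Matrix (Fin 5) (Fin 5) ℝ} (hN : Nᵀ = -N) (hX : Xᵀ = -X) :
    kil (N * X - X * N) X = 0 := by
  have hNX : (N * X - X * N)ᵀ = -(N * X - X * N) := by
    rw [transpose_sub, transpose_mul, transpose_mul, hN, hX]
    noncomm_ring
  rw [kil_of_transpose_eq_neg hNX hX]
  change killingForm ℝ so5Alg ⁅(⟨N, hN⟩ : so5Alg), ⟨X, hX⟩⁆ ⟨X, hX⟩ = 0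
  rw [LieModule.traceForm_apply_lie_apply, lie_self, map_zero]

end Killing

theorem torsion_term_vanishes_general (lam : ℝ)
    (Z X : Matrix (Fin 5) (Fin 5) ℝ) (hZ : Z ∈ mSub)
    (hX : X ∈ nSub.map ι4 ∨ X ∈ pSub) :
    gl lam (mPart (Z * X - X * Z)) X = 0 := by
  obtain ⟨_, ⟨A', hA', rfl⟩, Q, hQ, rfl⟩ := Submodule.mem_sup.mp hZ
  rw [gl_mPart_left, gl]
  rcases hX with ⟨A, hA, rfl⟩ | hX
  · rw [nPart_lie_ι4_of_mem_nSub hA' hA (blk_eq_zero_of_mem_pSub hQ), pPart_ι4, kil_zero_left,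
      kil_zero_right]
    ring
  · have hX0 := blk_eq_zero_of_mem_pSub hX
    have hA'skew : (ι4 A')ᵀ = -ι4 A' := by rw [ι4_transpose, hA'.1, map_neg]
    rw [nPart_of_blk_eq_zero hX0, pPart_of_blk_eq_zero hX0, pPart_lie_of_mem_pSub hQ hX,
      kil_zero_right, kil_lie_self hA'skew hX.1]
    ring

/-- Lemma on the torsion term `t`, part (i): for `λ > 0`, `Z ∈ m` and `X ∈ ι(n)` or
`X ∈ p`, one has `g_λ(π_m([Z,X]), X) = 0`. -/
theorem torsion_term_vanishes (lam : ℝ) (hlam : 0 < lam)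
    (Z X : Matrix (Fin 5) (Fin 5) ℝ) (hZ : Z ∈ mSub)
    (hX : X ∈ nSub.map ι4 ∨ X ∈ pSub) :
    gl lam (mPart (Z * X - X * Z)) X = 0 :=
  torsion_term_vanishes_general lam Z X hZ hX
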